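/- arXiv:2602.07692 — 2 statements merged into one kernel-verified Lean document; each statement's English description precedes it below -/
import Mathlib

section
/- If the scope function a is transitive (y ∈ a(x) implies a(y) ⊆ a(x)), then cl*_a is idempotent: cl*_a(cl*_a(A)) = cl*_a(A) for every subset A of X; equivalently (A ∪ A^a)^a ⊆ A ∪ A^a. -/
open Set

/-- The paper's `A^a`. -/
def auraLocal {X : Type*} (I : Set (Set X)) (a : X → Set X) (A : Set X) : Set X :=
  {x | a x ∩ A ∉ I}

section

variable {X : Type*} {I : Set (Set X)} {a : X → Set X}

lemma inter_auraLocal_eq_empty (hI_down : ∀ {A B : Set X}, A ∈ I → B ⊆ A → B ∈ I)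
    (ha_trans : ∀ x y, y ∈ a x → a y ⊆ a x) {A : Set X} {x : X} (hx : a x ∩ A ∈ I) :
    a x ∩ auraLocal I a A = ∅ := by
  refine eq_empty_of_forall_notMem fun y ⟨hy, hyA⟩ => hyA ?_
  exact hI_down hx (inter_subset_inter_left A (ha_trans x y hy))

lemma auraLocal_union_auraLocal_subset (hI_down : ∀ {A B : Set X}, A ∈ I → B ⊆ A → B ∈ I)
    (ha_trans : ∀ x y, y ∈ a x → a y ⊆ a x) (A : Set X) :
    auraLocal I a (A ∪ auraLocal I a A) ⊆ auraLocal I a A := by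
  intro x hx hxA
  apply hx
  rw [inter_union_distrib_left, inter_auraLocal_eq_empty hI_down ha_trans hxA, union_empty]
  exact hxA

end

theorem stmt_11_general {X : Type*} (I : Set (Set X))
    (hI_down : ∀ {A B : Set X}, A ∈ I → B ⊆ A → B ∈ I)
    (a : X → Set X)
    (ha_trans : ∀ x y, y ∈ a x → a y ⊆ a x)
    (A : Set X) :
    (let cls : Set X → Set X := fun S => S ∪ {x : X | a x ∩ S ∉ I}
     cls (cls A) = cls A) ∧
    {x : X | a x ∩ (A ∪ {y : X | a y ∩ A ∉ I}) ∉ I} ⊆ A ∪ {y : X | a y ∩ A ∉ I} := by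
  have key : auraLocal I a (A ∪ auraLocal I a A) ⊆ A ∪ auraLocal I a A :=
    (auraLocal_union_auraLocal_subset hI_down ha_trans A).trans subset_union_right
  exact ⟨union_eq_self_of_subset_right key, key⟩

theorem stmt_11 {X : Type*} [TopologicalSpace X] (I : Set (Set X))
    (hI_down : ∀ {A B : Set X}, A ∈ I → B ⊆ A → B ∈ I)
    (hI_union : ∀ {A B : Set X}, A ∈ I → B ∈ I → A ∪ B ∈ I)
    (a : X → Set X) (ha_open : ∀ x, IsOpen (a x)) (ha_mem : ∀ x, x ∈ a x)
    (ha_trans : ∀ x y, y ∈ a x → a y ⊆ a x)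
    (A : Set X) :
    (let cls : Set X → Set X := fun S => S ∪ {x : X | a x ∩ S ∉ I}
     cls (cls A) = cls A) ∧
    {x : X | a x ∩ (A ∪ {y : X | a y ∩ A ∉ I}) ∉ I} ⊆ A ∪ {y : X | a y ∩ A ∉ I} :=
  stmt_11_general I hI_down a ha_trans A
end

section
/- For a transitive scope function a, every basic set of the form a(y) \ J with J ∈ I is ideal-aura open: B = a(y) \ J satisfies B ⊆ ψ_a(B), i.e., for every x ∈ B, a(x) \ B ∈ I. -/
open Set

theorem stmt_17_general {X : Type*} (I : Set (Set X))
    (hI_down : ∀ {A B : Set X}, A ∈ I → B ⊆ A → B ∈ I)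
    (a : X → Set X)
    (ha_trans : ∀ x y, y ∈ a x → a y ⊆ a x)
    (y : X) (J : Set X) (hJ : J ∈ I) :
    a y \ J ⊆ {x : X | a x \ (a y \ J) ∈ I} := fun x hx =>
  hI_down hJ <| sdiff_subset_iff.2 <| by
    rw [sdiff_union_self]
    exact (ha_trans y x hx.1).trans subset_union_left

theorem stmt_17 {X : Type*} [TopologicalSpace X] (I : Set (Set X))
    (hI_down : ∀ {A B : Set X}, A ∈ I → B ⊆ A → B ∈ I)
    (hI_union : ∀ {A B : Set X}, A ∈ I → B ∈ I → A ∪ B ∈ I)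
    (a : X → Set X) (ha_open : ∀ x, IsOpen (a x)) (ha_mem : ∀ x, x ∈ a x)
    (ha_trans : ∀ x y, y ∈ a x → a y ⊆ a x)
    (y : X) (J : Set X) (hJ : J ∈ I) :
    a y \ J ⊆ {x : X | a x \ (a y \ J) ∈ I} :=
  stmt_17_general I hI_down a ha_trans y J hJ
end
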